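/- Let q ∈ (1/4, 1/2) and let E'_q = {1, 2q, 2q²+q, 4q², …} be the set of endpoints obtained by placing the gap intervals of the Cantor set F_q side by side in decreasing order of length, ending at 1. For r ∈ [(2q)^n, (2q)^{n-1}], the gap sum satisfies G_{1/2}(closure(E'_q) ∩ [r, ∞)) ≤ (√(1-2q)/(2√q - 1)) · (2√q)^n. -/
import Mathlib


open Set ENNReal

/-- The bounded complementary intervals (gaps) of `K ⊆ ℝ`, encoded by their endpoint pairs. -/
def gaps (K : Set ℝ) : Set (ℝ × ℝ) :=
  {p : ℝ × ℝ | p.1 ∈ K ∧ p.2 ∈ K ∧ p.1 < p.2 ∧ Set.Ioo p.1 p.2 ∩ K = ∅}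

/-- The degree-`1/2` gap sum of `K ⊆ ℝ`. -/
noncomputable def gapSumHalf (K : Set ℝ) : ℝ≥0∞ :=
  ∑' p : gaps K, ENNReal.ofReal (Real.sqrt (p.1.2 - p.1.1))

/-- The `i`-th gap length when the gaps of `F_q` (2^k gaps of length `(1-2q)q^k`) are
listed in non-increasing order. -/
noncomputable def gapLen (q : ℝ) (i : ℕ) : ℝ := (1 - 2 * q) * q ^ (Nat.log2 (i + 1))

/-- The endpoints obtained by placing the gaps of `F_q` side by side, ending at `1`. -/
noncomputable def Eq' (q : ℝ) : Set ℝ :=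
  Set.range (fun m : ℕ => 1 - ∑ i ∈ Finset.range m, gapLen q i)

lemma sqrt_pow'' (x : ℝ) (hx : 0 ≤ x) (k : ℕ) :
    Real.sqrt (x ^ k) = Real.sqrt x ^ k := by
  induction k with
  | zero => simp
  | succ k ih => rw [pow_succ, pow_succ, Real.sqrt_mul (pow_nonneg hx _), ih]

lemma sum_pow_log2 (x : ℝ) (n : ℕ) :
    ∑ i ∈ Finset.range (2 ^ n - 1), x ^ Nat.log2 (i + 1)
      = ∑ j ∈ Finset.range n, (2 * x) ^ j := by
  induction n with
  | zero => simp
  | succ n ih =>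
    have h2 : 1 ≤ (2:ℕ) ^ n := Nat.one_le_two_pow
    have hp : (2:ℕ) ^ (n + 1) = 2 * 2 ^ n := by ring
    have h1 : (2:ℕ) ^ n - 1 ≤ 2 ^ (n + 1) - 1 := by omega
    rw [Finset.range_eq_Ico, ← Finset.sum_Ico_consecutive _ (Nat.zero_le _) h1,
      ← Finset.range_eq_Ico, ih, Finset.sum_range_succ]
    congr 1
    have hconst : ∀ i ∈ Finset.Ico (2 ^ n - 1) (2 ^ (n + 1) - 1),
        x ^ Nat.log2 (i + 1) = x ^ n := by
      intro i hi
      simp only [Finset.mem_Ico] at hi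
      have hl : Nat.log2 (i + 1) = n := by
        rw [Nat.log2_eq_log_two]
        exact Nat.log_eq_of_pow_le_of_lt_pow (by omega) (by omega)
      rw [hl]
    rw [Finset.sum_congr rfl hconst, Finset.sum_const, nsmul_eq_mul]
    have hcard : (Finset.Ico (2 ^ n - 1) (2 ^ (n + 1) - 1)).card = 2 ^ n := by
      rw [Nat.card_Ico]; omega
    rw [hcard]
    push_cast
    ring

/-- For `q ∈ (1/4, 1/2)` and `r ∈ [(2q)^n, (2q)^{n-1}]` with `n ≥ 1`, the gap sum of
`closure(E'_q) ∩ [r,∞)` is at most `(√(1-2q)/(2√q - 1))·(2√q)^n`. -/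
theorem stmt13 (q : ℝ) (hq0 : 1 / 4 < q) (hq : q < 1 / 2) (n : ℕ) (hn : 1 ≤ n)
    (r : ℝ) (hr1 : (2 * q) ^ n ≤ r) (hr2 : r ≤ (2 * q) ^ (n - 1)) :
    gapSumHalf (closure (Eq' q) ∩ Set.Ici r) ≤
      ENNReal.ofReal
        (Real.sqrt (1 - 2 * q) / (2 * Real.sqrt q - 1) * (2 * Real.sqrt q) ^ n) := by
  have hq0' : 0 < q := lt_trans (by norm_num) hq0
  have h2q : 2 * q < 1 := by linarith
  have h2q0 : 0 < 2 * q := by linarith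
  have h1m : 0 < 1 - 2 * q := by linarith
  have h2n1 : 1 ≤ (2:ℕ) ^ n := Nat.one_le_two_pow
  set a : ℕ → ℝ := fun m => 1 - ∑ i ∈ Finset.range m, gapLen q i with ha
  have hEqr : Eq' q = Set.range a := rfl
  have hgap_pos : ∀ i, 0 < gapLen q i := fun i => mul_pos h1m (pow_pos hq0' _)
  have hstep : ∀ m, a (m + 1) = a m - gapLen q m := by
    intro m
    simp only [ha, Finset.sum_range_succ]
    ring
  have hsa : StrictAnti a := strictAnti_nat_of_succ_lt fun m => by
    rw [hstep]; linarith [hgap_pos m]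
  have hne1 : (2 * q) ≠ 1 := ne_of_lt h2q
  have hsum : ∀ k : ℕ, ∑ i ∈ Finset.range (2 ^ k - 1), gapLen q i = 1 - (2 * q) ^ k := by
    intro k
    have h1 : ∑ i ∈ Finset.range (2 ^ k - 1), gapLen q i
        = (1 - 2 * q) * ∑ i ∈ Finset.range (2 ^ k - 1), q ^ Nat.log2 (i + 1) := by
      rw [Finset.mul_sum]
      exact Finset.sum_congr rfl fun i _ => rfl
    rw [h1, sum_pow_log2, geom_sum_eq hne1]
    have hd : 2 * q - 1 ≠ 0 := by linarith
    field_simp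
    ring
  have ha2 : ∀ k : ℕ, a (2 ^ k - 1) = (2 * q) ^ k := by
    intro k
    show 1 - _ = _
    rw [hsum]; ring
  have hr0 : 0 < r := lt_of_lt_of_le (pow_pos h2q0 n) hr1
  set K := closure (Eq' q) ∩ Set.Ici r with hK
  have hmem : ∀ m, r ≤ a m → a m ∈ K := fun m hm => ⟨subset_closure ⟨m, rfl⟩, hm⟩
  have han : a (2 ^ n) < r := by
    have h1 : a (2 ^ n) < a (2 ^ n - 1) := hsa (by omega)
    rw [ha2] at h1
    linarith
  have hKsub : ∀ x ∈ K, ∃ m, x = a m ∧ r ≤ a m := by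
    intro x hx
    have hcl : closure (Eq' q) ⊆ (a '' Set.Iio (2 ^ n)) ∪ Set.Iic (a (2 ^ n)) := by
      apply closure_minimal
      · rw [hEqr]
        rintro y ⟨m, rfl⟩
        by_cases hm : m < 2 ^ n
        · exact Or.inl ⟨m, hm, rfl⟩
        · exact Or.inr (hsa.antitone (le_of_not_gt hm))
      · exact (((Set.finite_Iio _).image a).isClosed).union isClosed_Iic
    rcases hcl hx.1 with ⟨m, _, rfl⟩ | hx1
    · exact ⟨m, rfl, hx.2⟩
    · exact absurd (lt_of_le_of_lt hx1 han) (not_lt.mpr hx.2)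
  have hchar : ∀ p : ℝ × ℝ, p ∈ gaps K →
      ∃ m, m + 1 < 2 ^ n ∧ p.1 = a (m + 1) ∧ p.2 = a m := by
    rintro ⟨x, y⟩ ⟨hx, hy, hlt, hempty⟩
    obtain ⟨m1, rfl, hm1⟩ := hKsub x hx
    obtain ⟨m2, rfl, hm2⟩ := hKsub y hy
    have hlt' : m2 < m1 := by
      by_contra h
      exact absurd (hsa.antitone (le_of_not_gt h)) (not_le.mpr hlt)
    have heq : m1 = m2 + 1 := by
      by_contra h
      have hlt2 : m2 + 1 < m1 := by omega
      have hin : a (m2 + 1) ∈ Set.Ioo (a m1) (a m2) ∩ K :=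
        ⟨⟨hsa hlt2, hsa (Nat.lt_succ_self m2)⟩,
          hmem _ (le_trans hm1 (hsa.antitone hlt2.le))⟩
      rw [hempty] at hin
      exact hin
    subst heq
    refine ⟨m2, ?_, rfl, rfl⟩
    by_contra hb
    push_neg at hb
    have hlt3 : a (m2 + 1) < a (2 ^ n - 1) := hsa (by omega)
    rw [ha2] at hlt3
    linarith
  choose g hg1 hg2 hg3 using hchar
  set G : gaps K → ℕ := fun p => g p.1 p.2 with hG
  have hGinj : Function.Injective G := by
    rintro ⟨p, hp⟩ ⟨p', hp'⟩ hgp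
    simp only [hG] at hgp
    apply Subtype.ext
    have e2 : p.2 = p'.2 := by rw [hg3 p hp, hg3 p' hp', hgp]
    have e1 : p.1 = p'.1 := by rw [hg2 p hp, hg2 p' hp', hgp]
    exact Prod.ext e1 e2
  set h : ℕ → ℝ≥0∞ :=
    fun m => if m + 1 < 2 ^ n then ENNReal.ofReal (Real.sqrt (gapLen q m)) else 0 with hh
  have hterm : ∀ p : gaps K,
      ENNReal.ofReal (Real.sqrt (p.1.2 - p.1.1)) = h (G p) := by
    rintro ⟨p, hp⟩
    simp only [hG, hh]
    rw [if_pos (hg1 p hp)]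
    congr 2
    rw [hg2 p hp, hg3 p hp, hstep]
    ring
  have hfinal : ∑ m ∈ Finset.range (2 ^ n - 1), Real.sqrt (gapLen q m)
      ≤ Real.sqrt (1 - 2 * q) / (2 * Real.sqrt q - 1) * (2 * Real.sqrt q) ^ n := by
    have hsqq : (1:ℝ) / 2 < Real.sqrt q := by
      rw [show ((1:ℝ)/2) = Real.sqrt (1/4) by
        rw [show (1:ℝ)/4 = (1/2)^2 by norm_num, Real.sqrt_sq (by norm_num)]]
      exact Real.sqrt_lt_sqrt (by norm_num) hq0
    have hden : 0 < 2 * Real.sqrt q - 1 := by linarith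
    have hsne1 : 2 * Real.sqrt q ≠ 1 := by linarith
    have h1 : ∀ m : ℕ, Real.sqrt (gapLen q m)
        = Real.sqrt (1 - 2 * q) * Real.sqrt q ^ Nat.log2 (m + 1) := by
      intro m
      rw [show gapLen q m = (1 - 2*q) * q ^ Nat.log2 (m+1) from rfl,
        Real.sqrt_mul h1m.le, sqrt_pow'' q hq0'.le]
    calc ∑ m ∈ Finset.range (2 ^ n - 1), Real.sqrt (gapLen q m)
        = Real.sqrt (1 - 2 * q)
            * ∑ m ∈ Finset.range (2 ^ n - 1), Real.sqrt q ^ Nat.log2 (m + 1) := by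
          rw [Finset.mul_sum]
          exact Finset.sum_congr rfl fun m _ => h1 m
      _ = Real.sqrt (1 - 2 * q)
            * (((2 * Real.sqrt q) ^ n - 1) / (2 * Real.sqrt q - 1)) := by
          rw [sum_pow_log2, geom_sum_eq hsne1]
      _ ≤ Real.sqrt (1 - 2 * q) * ((2 * Real.sqrt q) ^ n / (2 * Real.sqrt q - 1)) := by
          apply mul_le_mul_of_nonneg_left _ (Real.sqrt_nonneg _)
          gcongr
          linarith
      _ = Real.sqrt (1 - 2 * q) / (2 * Real.sqrt q - 1) * (2 * Real.sqrt q) ^ n := by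
          ring
  calc gapSumHalf K = ∑' p : gaps K, h (G p) := tsum_congr hterm
    _ ≤ ∑' m, h m := ENNReal.tsum_comp_le_tsum_of_injective hGinj h
    _ = ∑ m ∈ Finset.range (2 ^ n - 1), ENNReal.ofReal (Real.sqrt (gapLen q m)) := by
        rw [tsum_eq_sum (s := Finset.range (2 ^ n - 1))
          (fun m hm => by
            simp only [Finset.mem_range] at hm
            exact if_neg (by omega))]
        exact Finset.sum_congr rfl fun m hm => by
          simp only [Finset.mem_range] at hm
          exact if_pos (by omega)
    _ = ENNReal.ofReal (∑ m ∈ Finset.range (2 ^ n - 1), Real.sqrt (gapLen q m)) :=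
        (ENNReal.ofReal_sum_of_nonneg fun m _ => Real.sqrt_nonneg _).symm
    _ ≤ _ := ENNReal.ofReal_le_ofReal hfinal
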